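/- For every ordinal β < α, the set difference X^{β+1} ∖ (⋃_{0≤γ≤β} X^γ) is nonempty; that is, the shortening of order β+1 contains vectors not appearing in any shortening of order ≤ β. -/

import Mathlib

open Set Filter Topology

noncomputable section

namespace Paper

/-- `y` is an up-neighbor of `x` within the subforest `S`: both belong to `S`, `x < y`,
and no vertex of `S` lies strictly between them. -/
def UpNbrIn {P : Type*} [PartialOrder P] (S : Set P) (x y : P) : Prop :=
  x ∈ S ∧ y ∈ S ∧ x < y ∧ ∀ z ∈ S, ¬(x < z ∧ z < y)

/-- `x` is a terminal vertex of the subforest `S`: it has no up-neighbors within `S`. -/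
def TerminalIn {P : Type*} [PartialOrder P] (S : Set P) (x : P) : Prop :=
  x ∈ S ∧ ∀ y, ¬UpNbrIn S x y

/-- One step of the derived forest operation: delete every terminal vertex whose
down-neighbor has infinitely many terminal up-neighbors. -/
def derStep {P : Type*} [PartialOrder P] (S : Set P) : Set P :=
  S \ {x | TerminalIn S x ∧ ∃ u, UpNbrIn S u x ∧ {y | UpNbrIn S u y ∧ TerminalIn S y}.Infinite}

/-- Transfinite iteration of the derived forest operation: `derIter S β = S^{(β)}`,
with intersections at limit stages. -/
def derIter {P : Type*} [PartialOrder P] (S : Set P) (β : Ordinal) : Set P :=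
  Ordinal.limitRecOn β S (fun _ T => derStep T)
    (fun β _ ih => ⋂ (γ : Ordinal), ⋂ (h : γ < β), ih γ h)

/-- Weak* closure of a set in the dual of a real normed space. -/
def wcl {Z : Type*} [NormedAddCommGroup Z] [NormedSpace ℝ Z]
    (A : Set (StrongDual ℝ Z)) : Set (StrongDual ℝ Z) :=
  StrongDual.toWeakDual ⁻¹' closure (StrongDual.toWeakDual '' A)

/-- The weak* derived set `A^{(1)} = ⋃ₙ weak*-closure (A ∩ n B_{Z*})`. -/
def derSet {Z : Type*} [NormedAddCommGroup Z] [NormedSpace ℝ Z]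
    (A : Set (StrongDual ℝ Z)) : Set (StrongDual ℝ Z) :=
  ⋃ n : ℕ, wcl (A ∩ {f | ‖f‖ ≤ (n : ℝ)})

/-- Transfinite weak* derived sets: `A^{(0)} = A`, `A^{(β+1)} = (A^{(β)})^{(1)}`, and
`A^{(β)} = ⋃_{γ<β} A^{(γ)}` at limit stages. -/
def derSetIter {Z : Type*} [NormedAddCommGroup Z] [NormedSpace ℝ Z]
    (A : Set (StrongDual ℝ Z)) (α : Ordinal) : Set (StrongDual ℝ Z) :=
  Ordinal.limitRecOn α A (fun _ T => derSet T)
    (fun α _ ih => ⋃ (β : Ordinal), ⋃ (h : β < α), ih β h)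

/-- The coefficient attached to a vertex `u` of the forest: the label of its down-neighbor,
or the label of `u` itself when `u` is an initial vertex (`n₀ = n₁`). -/
def coefN {P : Type*} [PartialOrder P] (e : P → ℕ) (u : P) : ℕ :=
  letI := Classical.dec (∃ w, w ⋖ u)
  if h : ∃ w, w ⋖ u then e h.choose else e u

/-- The vector `z*(v)` shortened to the subforest `S`:
`∑_{u ≤ v, u ∈ S} n_{i-1} z*_{n_i}`. -/
def shortVec {P : Type*} [PartialOrder P] {Z : Type*} [NormedAddCommGroup Z] [NormedSpace ℝ Z]
    (e : P → ℕ) (zs : ℕ → StrongDual ℝ Z) (S : Set P) (v : P) : StrongDual ℝ Z :=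
  ∑ᶠ u ∈ ({w | w ≤ v} ∩ S), (coefN e u : ℝ) • zs (e u)

/-- The shortening `X^β` of the set `X_α` to the subforest `S` (for `S = (F_α)^β`);
for `S = univ` this is `X_α` itself. -/
def XsetOf {P : Type*} [PartialOrder P] {Z : Type*} [NormedAddCommGroup Z] [NormedSpace ℝ Z]
    (e : P → ℕ) (zs : ℕ → StrongDual ℝ Z) (S : Set P) : Set (StrongDual ℝ Z) :=
  {x | ∃ v : P, (¬∃ y, v ⋖ y) ∧ x = shortVec e zs S v}

/-- The largest index in the support of a vector of `X^β` (read off by evaluating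
against the basic sequence); it is the label of the vertex `v(x)`. -/
def topIdx {Z : Type*} [NormedAddCommGroup Z] [NormedSpace ℝ Z]
    (z : ℕ → Z) (x : StrongDual ℝ Z) : ℕ :=
  sSup {n | x (z n) ≠ 0}

/-- The vector `y(x)`: `x` with the coordinate at its top vertex `v(x)` replaced by `0`. -/
def truncTop {Z : Type*} [NormedAddCommGroup Z] [NormedSpace ℝ Z]
    (z : ℕ → Z) (zs : ℕ → StrongDual ℝ Z) (x : StrongDual ℝ Z) :
    StrongDual ℝ Z :=
  x - x (z (topIdx z x)) • zs (topIdx z x)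

/-!
Induction on `α` produces, for every `β < α`, a vertex `t` of `F_α` all of whose up-neighbors
survive to `(F_α)^β`, infinitely many of them terminal there, among them some `s` below a terminal
vertex `v`. The induction rests on the collapse of `F_{a+1}`: its components collapse to their roots
at stages `≤ a`, only finitely many before any stage `< a`, so up to stage `a` the derivation above
the new root runs componentwise, and at stage `a` the new root has infinitely many terminal
up-neighbors, the old roots, which are all deleted at stage `a + 1`.

Then `s` is deleted at stage `β + 1` while `t` survives. Evaluating against the basic sequence,
a shortened vector determines its support `{u ≤ v} ∩ (F_α)^γ`; the support of the shortening of
`z*(v)` to stage `β + 1` contains `t` but no up-neighbor of `t`, whereas a support at a stage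
`γ ≤ β` that contains `t` below a terminal vertex also contains an up-neighbor of `t`.
-/

section DerivedForest

variable {P : Type*} [PartialOrder P]

def terminalUpNbrs (S : Set P) (u : P) : Set P :=
  {y | UpNbrIn S u y ∧ TerminalIn S y}

def Prunable (S : Set P) (x : P) : Prop :=
  TerminalIn S x ∧ ∃ u, UpNbrIn S u x ∧ (terminalUpNbrs S u).Infinite

lemma mem_derStep {S : Set P} {x : P} : x ∈ derStep S ↔ x ∈ S ∧ ¬Prunable S x :=
  Iff.rfl

lemma derStep_subset (S : Set P) : derStep S ⊆ S :=
  sdiff_subset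

lemma notMem_derStep {S : Set P} {t s : P} (hs : TerminalIn S s) (hts : UpNbrIn S t s)
    (hinf : (terminalUpNbrs S t).Infinite) : s ∉ derStep S :=
  fun h => h.2 ⟨hs, t, hts, hinf⟩

lemma derIter_zero (S : Set P) : derIter S 0 = S :=
  Ordinal.limitRecOn_zero ..

lemma derIter_add_one (S : Set P) (γ : Ordinal) :
    derIter S (γ + 1) = derStep (derIter S γ) :=
  Ordinal.limitRecOn_add_one ..

lemma mem_derIter_limit {S : Set P} {L : Ordinal} (hL : Order.IsSuccLimit L) {x : P} :
    x ∈ derIter S L ↔ ∀ γ < L, x ∈ derIter S γ := by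
  rw [derIter, Ordinal.limitRecOn_limit _ _ _ _ hL]
  simp only [mem_iInter]
  rfl

lemma derIter_subset (S : Set P) (γ : Ordinal) : derIter S γ ⊆ S := by
  induction γ using Ordinal.limitRecOn with
  | zero => rw [derIter_zero]
  | add_one a ih => rw [derIter_add_one]; exact (derStep_subset _).trans ih
  | limit L hL _ => exact fun x hx => derIter_zero S ▸ (mem_derIter_limit hL).1 hx 0 hL.pos

lemma derIter_antitone (S : Set P) : Antitone (derIter S) := by
  intro γ δ hle
  induction δ using Ordinal.limitRecOn with
  | zero => rw [nonpos_iff_eq_zero.1 hle]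
  | add_one a ih =>
    rcases hle.lt_or_eq with hlt | rfl
    · rw [derIter_add_one]; exact (derStep_subset _).trans (ih (Order.lt_add_one_iff.1 hlt))
    · rfl
  | limit L hL _ =>
    rcases hle.lt_or_eq with hlt | rfl
    · exact fun x hx => (mem_derIter_limit hL).1 hx γ hlt
    · rfl

lemma derStep_singleton (r : P) : derStep {r} = {r} := by
  refine (derStep_subset _).antisymm fun x hx => ⟨hx, ?_⟩
  rintro ⟨-, u, ⟨hu, -, hlt, -⟩, -⟩
  exact hlt.ne (hu.trans hx.symm)

lemma derIter_eq_singleton_of_le {S : Set P} {r : P} {γ δ : Ordinal} (h : derIter S γ = {r})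
    (hle : γ ≤ δ) : derIter S δ = {r} := by
  induction δ using Ordinal.limitRecOn with
  | zero => rwa [nonpos_iff_eq_zero.1 hle] at h
  | add_one a ih =>
    rcases hle.lt_or_eq with hlt | rfl
    · rw [derIter_add_one, ih (Order.lt_add_one_iff.1 hlt), derStep_singleton]
    · exact h
  | limit L hL ih =>
    refine (h ▸ derIter_antitone S hle).antisymm fun x hx => (mem_derIter_limit hL).2 fun β hβ => ?_
    rcases le_total β γ with hβγ | hγβ
    · exact derIter_antitone S hβγ (h ▸ hx)
    · exact (ih β hβ hγβ).symm ▸ hx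

lemma mem_derIter_of_isMin {S : Set P} {r : P} (hr : IsMin r) (hrS : r ∈ S) (γ : Ordinal) :
    r ∈ derIter S γ := by
  induction γ using Ordinal.limitRecOn with
  | zero => rwa [derIter_zero]
  | add_one a ih =>
    rw [derIter_add_one]
    exact ⟨ih, fun ⟨_, u, ⟨_, _, hlt, _⟩, _⟩ => hr.not_lt hlt⟩
  | limit L hL ih => exact (mem_derIter_limit hL).2 ih

end DerivedForest

section Forest

variable {P : Type*} [PartialOrder P]

lemma exists_upNbrIn_le (hfin : ∀ x : P, (Iic x).Finite) {S : Set P} {x y : P} (hx : x ∈ S)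
    (hy : y ∈ S) (hxy : x < y) : ∃ c, UpNbrIn S x c ∧ c ≤ y := by
  obtain ⟨c, ⟨hcS, hxc, hcy⟩, hmin⟩ := ((hfin y).subset fun c (hc : c ∈ S ∧ x < c ∧ c ≤ y) =>
    hc.2.2).exists_minimalFor id _ ⟨y, hy, hxy, le_rfl⟩
  exact ⟨c, ⟨hx, hcS, hxc, fun d hd ⟨hxd, hdc⟩ =>
    hdc.not_ge (hmin ⟨hd, hxd, hdc.le.trans hcy⟩ hdc.le)⟩, hcy⟩

lemma exists_covBy_le_of_finite_Iic (hfin : ∀ x : P, (Iic x).Finite) {x y : P} (hxy : x < y) :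
    ∃ c, x ⋖ c ∧ c ≤ y := by
  obtain ⟨c, ⟨-, -, hxc, hno⟩, hcy⟩ := exists_upNbrIn_le hfin (mem_univ x) (mem_univ y) hxy
  exact ⟨c, ⟨hxc, fun d hxd hdc => hno d (mem_univ d) ⟨hxd, hdc⟩⟩, hcy⟩

lemma terminalIn_iff (hfin : ∀ x : P, (Iic x).Finite) {S : Set P} {x : P} :
    TerminalIn S x ↔ x ∈ S ∧ ∀ y ∈ S, ¬x < y := by
  refine ⟨fun ⟨hx, hno⟩ => ⟨hx, fun y hy hxy => ?_⟩, fun ⟨hx, hno⟩ =>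
    ⟨hx, fun y hy => hno y hy.2.1 hy.2.2.1⟩⟩
  obtain ⟨c, hc, -⟩ := exists_upNbrIn_le hfin hx hy hxy
  exact hno c hc

lemma mem_derStep_of_lt (hfin : ∀ x : P, (Iic x).Finite) {S : Set P} {x y : P} (hx : x ∈ S)
    (hy : y ∈ S) (hxy : x < y) : x ∈ derStep S :=
  ⟨hx, fun ⟨hterm, _⟩ => ((terminalIn_iff hfin).1 hterm).2 y hy hxy⟩

lemma upNbrIn_iff_covBy {S : Set P} (hS : S.OrdConnected) {u x : P} :
    UpNbrIn S u x ↔ u ∈ S ∧ x ∈ S ∧ u ⋖ x := by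
  refine ⟨fun ⟨hu, hx, hlt, hno⟩ => ⟨hu, hx, hlt, fun z huz hzx => ?_⟩,
    fun ⟨hu, hx, hlt, hno⟩ => ⟨hu, hx, hlt, fun z _ hz => hno hz.1 hz.2⟩⟩
  exact hno z (hS.out hu hx ⟨huz.le, hzx.le⟩) ⟨huz, hzx⟩

lemma CovBy.eq_of_covBy_of_le (hchain : ∀ x y w : P, y ≤ x → w ≤ x → y ≤ w ∨ w ≤ y)
    {t s s' v : P} (hs : t ⋖ s) (hs' : t ⋖ s') (hsv : s ≤ v) (hs'v : s' ≤ v) : s = s' := by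
  rcases hchain v s s' hsv hs'v with h | h
  · exact h.eq_or_lt.resolve_right fun hlt => hs'.2 hs.1 hlt
  · exact (h.eq_or_lt.resolve_right fun hlt => hs.2 hs'.1 hlt).symm

lemma isLowerSet_derStep (hfin : ∀ x : P, (Iic x).Finite) {S : Set P} (hS : IsLowerSet S) :
    IsLowerSet (derStep S) := by
  intro x y hyx hx
  rcases hyx.eq_or_lt with rfl | hlt
  · exact hx
  · exact mem_derStep_of_lt hfin (hS hyx hx.1) hx.1 hlt

lemma isLowerSet_derIter (hfin : ∀ x : P, (Iic x).Finite) (γ : Ordinal) :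
    IsLowerSet (derIter (univ : Set P) γ) := by
  induction γ using Ordinal.limitRecOn with
  | zero => rw [derIter_zero]; exact isLowerSet_univ
  | add_one a ih => rw [derIter_add_one]; exact isLowerSet_derStep hfin ih
  | limit L hL ih =>
    intro x y hyx hx
    exact (mem_derIter_limit hL).2 fun β hβ => ih β hβ hyx ((mem_derIter_limit hL).1 hx β hβ)

end Forest

section Image

variable {P Q : Type*} [PartialOrder P] [PartialOrder Q] (f : Q ↪o P) (S : Set Q)

lemma upNbrIn_image_iff {u x : Q} : UpNbrIn (f '' S) (f u) (f x) ↔ UpNbrIn S u x := by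
  simp only [UpNbrIn, f.injective.mem_set_image, f.lt_iff_lt, forall_mem_image]

lemma exists_of_upNbrIn_image {a b : P} (h : UpNbrIn (f '' S) a b) :
    ∃ u ∈ S, ∃ x ∈ S, a = f u ∧ b = f x := by
  obtain ⟨⟨u, hu, rfl⟩, ⟨x, hx, rfl⟩, -⟩ := h
  exact ⟨u, hu, x, hx, rfl, rfl⟩

lemma terminalIn_image_iff {x : Q} : TerminalIn (f '' S) (f x) ↔ TerminalIn S x := by
  refine ⟨fun ⟨hx, hno⟩ => ⟨f.injective.mem_set_image.1 hx, fun y hy =>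
    hno (f y) ((upNbrIn_image_iff f S).2 hy)⟩, fun ⟨hx, hno⟩ => ⟨mem_image_of_mem f hx, ?_⟩⟩
  intro b hb
  obtain ⟨u, -, y, -, hu, rfl⟩ := exists_of_upNbrIn_image f S hb
  rw [f.injective hu] at hb hno
  exact hno y ((upNbrIn_image_iff f S).1 hb)

lemma terminalUpNbrs_image (u : Q) :
    terminalUpNbrs (f '' S) (f u) = f '' terminalUpNbrs S u := by
  ext b
  refine ⟨fun ⟨hup, hterm⟩ => ?_, ?_⟩
  · obtain ⟨-, -, y, -, -, rfl⟩ := exists_of_upNbrIn_image f S hup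
    exact ⟨y, ⟨(upNbrIn_image_iff f S).1 hup, (terminalIn_image_iff f S).1 hterm⟩, rfl⟩
  · rintro ⟨y, ⟨hup, hterm⟩, rfl⟩
    exact ⟨(upNbrIn_image_iff f S).2 hup, (terminalIn_image_iff f S).2 hterm⟩

lemma prunable_image_iff {x : Q} : Prunable (f '' S) (f x) ↔ Prunable S x := by
  refine and_congr (terminalIn_image_iff f S) ⟨fun ⟨a, hup, hinf⟩ => ?_, fun ⟨u, hup, hinf⟩ =>
    ⟨f u, (upNbrIn_image_iff f S).2 hup, ?_⟩⟩
  · obtain ⟨u, -, -, -, rfl, -⟩ := exists_of_upNbrIn_image f S hup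
    rw [terminalUpNbrs_image] at hinf
    exact ⟨u, (upNbrIn_image_iff f S).1 hup, hinf.of_image _⟩
  · rw [terminalUpNbrs_image]
    exact hinf.image f.injective.injOn

lemma derStep_image : derStep (f '' S) = f '' derStep S := by
  ext b
  constructor
  · rintro ⟨⟨x, hx, rfl⟩, hx'⟩
    exact ⟨x, ⟨hx, fun h => hx' ((prunable_image_iff f S).2 h)⟩, rfl⟩
  · rintro ⟨x, ⟨hx, hx'⟩, rfl⟩
    exact ⟨mem_image_of_mem f hx, fun h => hx' ((prunable_image_iff f S).1 h)⟩

lemma derIter_image (γ : Ordinal) : derIter (f '' S) γ = f '' derIter S γ := by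
  induction γ using Ordinal.limitRecOn with
  | zero => simp only [derIter_zero]
  | add_one a ih => rw [derIter_add_one, derIter_add_one, ih, derStep_image]
  | limit L hL ih =>
    ext b
    rw [mem_derIter_limit hL]
    constructor
    · intro hb
      obtain ⟨x, -, rfl⟩ := derIter_subset _ 0 (hb 0 hL.pos)
      refine ⟨x, (mem_derIter_limit hL).2 fun β hβ => ?_, rfl⟩
      exact f.injective.mem_set_image.1 (ih β hβ ▸ hb β hβ)
    · rintro ⟨x, hx, rfl⟩ β hβ
      rw [ih β hβ]
      exact mem_image_of_mem f ((mem_derIter_limit hL).1 hx β hβ)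

end Image

section DisjointUnion

variable {P : Type*} [PartialOrder P] {ι : Type*} {S : ι → Set P}

def PairwiseIncomparable (S : ι → Set P) : Prop :=
  ∀ i j, i ≠ j → ∀ x ∈ S i, ∀ y ∈ S j, ¬x ≤ y

lemma PairwiseIncomparable.eq_of_le (hS : PairwiseIncomparable S) {i j : ι} {x y : P}
    (hx : x ∈ S i) (hy : y ∈ S j) (hxy : x ≤ y) : i = j :=
  of_not_not fun hij => hS i j hij x hx y hy hxy

lemma PairwiseIncomparable.mono {T : ι → Set P} (hS : PairwiseIncomparable S)
    (hT : ∀ i, T i ⊆ S i) : PairwiseIncomparable T :=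
  fun i j hij x hx y hy => hS i j hij x (hT i hx) y (hT j hy)

lemma PairwiseIncomparable.upNbrIn_iUnion_iff (hS : PairwiseIncomparable S) {i : ι} {u x : P}
    (hu : u ∈ S i) : UpNbrIn (⋃ j, S j) u x ↔ UpNbrIn (S i) u x := by
  constructor
  · rintro ⟨-, hx, hux, hno⟩
    obtain ⟨j, hxj⟩ := mem_iUnion.1 hx
    obtain rfl := hS.eq_of_le hu hxj hux.le
    exact ⟨hu, hxj, hux, fun z hz => hno z (mem_iUnion_of_mem _ hz)⟩
  · rintro ⟨-, hx, hux, hno⟩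
    refine ⟨mem_iUnion_of_mem _ hu, mem_iUnion_of_mem _ hx, hux, fun z hz hzx => ?_⟩
    obtain ⟨j, hzj⟩ := mem_iUnion.1 hz
    obtain rfl := hS.eq_of_le hu hzj hzx.1.le
    exact hno z hzj hzx

lemma PairwiseIncomparable.terminalIn_iUnion_iff (hS : PairwiseIncomparable S) {i : ι} {x : P}
    (hx : x ∈ S i) : TerminalIn (⋃ j, S j) x ↔ TerminalIn (S i) x := by
  simp only [TerminalIn, hS.upNbrIn_iUnion_iff hx, hx, mem_iUnion_of_mem i hx, true_and]

lemma PairwiseIncomparable.terminalUpNbrs_iUnion (hS : PairwiseIncomparable S) {i : ι} {u : P}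
    (hu : u ∈ S i) : terminalUpNbrs (⋃ j, S j) u = terminalUpNbrs (S i) u := by
  ext y
  simp only [terminalUpNbrs, mem_ofPred_eq, hS.upNbrIn_iUnion_iff hu]
  exact and_congr_right fun hy => hS.terminalIn_iUnion_iff hy.2.1

lemma PairwiseIncomparable.prunable_iUnion_iff (hS : PairwiseIncomparable S) {i : ι} {x : P}
    (hx : x ∈ S i) : Prunable (⋃ j, S j) x ↔ Prunable (S i) x := by
  refine and_congr (hS.terminalIn_iUnion_iff hx)
    ⟨fun ⟨u, hup, hinf⟩ => ?_, fun ⟨u, hup, hinf⟩ => ?_⟩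
  · obtain ⟨j, huj⟩ := mem_iUnion.1 hup.1
    obtain rfl := hS.eq_of_le huj hx hup.2.2.1.le
    exact ⟨u, (hS.upNbrIn_iUnion_iff huj).1 hup, hS.terminalUpNbrs_iUnion huj ▸ hinf⟩
  · exact ⟨u, (hS.upNbrIn_iUnion_iff hup.1).2 hup, (hS.terminalUpNbrs_iUnion hup.1).symm ▸ hinf⟩

lemma PairwiseIncomparable.derStep_iUnion (hS : PairwiseIncomparable S) :
    derStep (⋃ i, S i) = ⋃ i, derStep (S i) := by
  ext x
  simp only [mem_derStep, mem_iUnion]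
  constructor
  · rintro ⟨⟨i, hx⟩, hpr⟩
    exact ⟨i, hx, fun h => hpr ((hS.prunable_iUnion_iff hx).2 h)⟩
  · rintro ⟨i, hx, hpr⟩
    exact ⟨⟨i, hx⟩, fun h => hpr ((hS.prunable_iUnion_iff hx).1 h)⟩

lemma PairwiseIncomparable.derIter_iUnion (hS : PairwiseIncomparable S) (γ : Ordinal) :
    derIter (⋃ i, S i) γ = ⋃ i, derIter (S i) γ := by
  induction γ using Ordinal.limitRecOn with
  | zero => simp only [derIter_zero]
  | add_one a ih =>
    simp only [derIter_add_one, ih]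
    exact (hS.mono fun i => derIter_subset (S i) a).derStep_iUnion
  | limit L hL ih =>
    ext x
    simp only [mem_derIter_limit hL, mem_iUnion]
    constructor
    · intro hx
      obtain ⟨i, hxi⟩ := mem_iUnion.1 (derIter_subset _ 0 (hx 0 hL.pos))
      refine ⟨i, fun β hβ => ?_⟩
      obtain ⟨j, hxj⟩ := mem_iUnion.1 (ih β hβ ▸ hx β hβ)
      obtain rfl := hS.eq_of_le (derIter_subset _ β hxj) hxi le_rfl
      exact hxj
    · rintro ⟨i, hx⟩ β hβ
      rw [ih β hβ]
      exact mem_iUnion_of_mem i (hx β hβ)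

end DisjointUnion

section AboveVertex

variable {P : Type*} [PartialOrder P] {S : Set P} {t : P}

lemma terminalIn_inter_Ioi_iff (hfin : ∀ x : P, (Iic x).Finite) {x : P} (hx : x ∈ S ∩ Ioi t) :
    TerminalIn S x ↔ TerminalIn (S ∩ Ioi t) x := by
  simp only [terminalIn_iff hfin, hx, hx.1, true_and, mem_inter_iff, mem_Ioi]
  exact ⟨fun h y hy => h y hy.1, fun h y hy hxy => h y ⟨hy, lt_trans hx.2 hxy⟩ hxy⟩

lemma upNbrIn_inter_Ioi_iff (hS : IsLowerSet S) {u x : P} (hu : u ∈ S ∩ Ioi t) :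
    UpNbrIn S u x ↔ UpNbrIn (S ∩ Ioi t) u x := by
  rw [upNbrIn_iff_covBy hS.ordConnected, upNbrIn_iff_covBy (hS.ordConnected.inter ordConnected_Ioi)]
  exact ⟨fun ⟨_, hx, hux⟩ => ⟨hu, ⟨hx, lt_trans hu.2 hux.1⟩, hux⟩,
    fun ⟨_, hx, hux⟩ => ⟨hu.1, hx.1, hux⟩⟩

lemma terminalUpNbrs_inter_Ioi (hfin : ∀ x : P, (Iic x).Finite) (hS : IsLowerSet S) {u : P}
    (hu : u ∈ S ∩ Ioi t) : terminalUpNbrs S u = terminalUpNbrs (S ∩ Ioi t) u := by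
  ext y
  simp only [terminalUpNbrs, mem_ofPred_eq, upNbrIn_inter_Ioi_iff hS hu]
  exact and_congr_right fun hy => terminalIn_inter_Ioi_iff hfin hy.2.1

/-- Only the up-neighbors of `t` change status: they become initial vertices of `S ∩ Ioi t`, and
the finiteness hypothesis keeps them from being pruned in `S`. -/
lemma prunable_inter_Ioi_iff (hfin : ∀ x : P, (Iic x).Finite)
    (hchain : ∀ x y w : P, y ≤ x → w ≤ x → y ≤ w ∨ w ≤ y) (hS : IsLowerSet S)
    (hfinite : {r | t ⋖ r ∧ TerminalIn (S ∩ Ioi t) r}.Finite) {x : P} (hx : x ∈ S ∩ Ioi t) :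
    Prunable S x ↔ Prunable (S ∩ Ioi t) x := by
  refine and_congr (terminalIn_inter_Ioi_iff hfin hx) ⟨fun ⟨u, hup, hinf⟩ => ?_,
    fun ⟨u, hup, hinf⟩ => ?_⟩
  · have hux := ((upNbrIn_iff_covBy hS.ordConnected).1 hup).2.2
    have htu : t ≤ u := by
      rcases hchain x t u hx.2.le hux.1.le with h | h
      · exact h
      · exact h.eq_or_lt.elim Eq.ge fun h => (hux.2 h hx.2).elim
    have hu : u ∈ S ∩ Ioi t := by
      refine ⟨hup.1, htu.lt_of_ne fun h => hinf (hfinite.subset fun y ⟨hy, hterm⟩ => ?_)⟩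
      subst h
      have hyT : y ∈ S ∩ Ioi t := ⟨hy.2.1, hy.2.2.1⟩
      exact ⟨((upNbrIn_iff_covBy hS.ordConnected).1 hy).2.2,
        (terminalIn_inter_Ioi_iff hfin hyT).1 hterm⟩
    exact ⟨u, (upNbrIn_inter_Ioi_iff hS hu).1 hup, terminalUpNbrs_inter_Ioi hfin hS hu ▸ hinf⟩
  · exact ⟨u, (upNbrIn_inter_Ioi_iff hS hup.1).2 hup,
      (terminalUpNbrs_inter_Ioi hfin hS hup.1).symm ▸ hinf⟩

lemma derStep_inter_Ioi (hfin : ∀ x : P, (Iic x).Finite)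
    (hchain : ∀ x y w : P, y ≤ x → w ≤ x → y ≤ w ∨ w ≤ y) (hS : IsLowerSet S)
    (hfinite : {r | t ⋖ r ∧ TerminalIn (S ∩ Ioi t) r}.Finite) :
    derStep S ∩ Ioi t = derStep (S ∩ Ioi t) := by
  ext x
  exact ⟨fun ⟨⟨hxS, hpr⟩, hxt⟩ => ⟨⟨hxS, hxt⟩, fun h =>
      hpr ((prunable_inter_Ioi_iff hfin hchain hS hfinite ⟨hxS, hxt⟩).2 h)⟩,
    fun ⟨hx, hpr⟩ => ⟨⟨hx.1, fun h => hpr ((prunable_inter_Ioi_iff hfin hchain hS hfinite hx).1 h)⟩,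
      hx.2⟩⟩

lemma derIter_inter_Ioi (hfin : ∀ x : P, (Iic x).Finite)
    (hchain : ∀ x y w : P, y ≤ x → w ≤ x → y ≤ w ∨ w ≤ y) {γ₀ : Ordinal}
    (hfinite : ∀ δ < γ₀, {r | t ⋖ r ∧ TerminalIn (derIter (Ioi t) δ) r}.Finite)
    (hne : ∀ δ < γ₀, (derIter (Ioi t) δ).Nonempty) {γ : Ordinal} (hγ : γ ≤ γ₀) :
    derIter univ γ ∩ Ioi t = derIter (Ioi t) γ ∧ t ∈ derIter univ γ := by
  induction γ using Ordinal.limitRecOn with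
  | zero => simp only [derIter_zero, univ_inter, mem_univ, and_self]
  | add_one a ih =>
    have ha : a < γ₀ := Order.lt_add_one_iff.2 le_rfl |>.trans_le hγ
    obtain ⟨hEq, ht⟩ := ih ha.le
    have hS := isLowerSet_derIter hfin a
    rw [derIter_add_one, derIter_add_one, ← hEq,
      derStep_inter_Ioi hfin hchain hS (hEq ▸ hfinite a ha)]
    obtain ⟨y, hy⟩ := hne a ha
    rw [← hEq] at hy
    exact ⟨rfl, mem_derStep_of_lt hfin ht hy.1 hy.2⟩
  | limit L hL ih =>
    refine ⟨?_, (mem_derIter_limit hL).2 fun β hβ => (ih β hβ (hβ.le.trans hγ)).2⟩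
    ext x
    simp only [mem_inter_iff, mem_derIter_limit hL]
    refine ⟨fun ⟨hx, hxt⟩ β hβ => ?_, fun hx => ⟨fun β hβ => ?_, ?_⟩⟩
    · exact (ih β hβ (hβ.le.trans hγ)).1 ▸ ⟨hx β hβ, hxt⟩
    · exact ((ih β hβ (hβ.le.trans hγ)).1 ▸ hx β hβ).1
    · exact derIter_subset _ 0 (hx 0 hL.pos)

end AboveVertex

section Witness

variable {P : Type*} [PartialOrder P]

/-- `s` is pruned at stage `β + 1` while `t` survives; this is what makes the shortening of `z*(v)`
to stage `β + 1` differ from every shortening to a stage `γ ≤ β`. -/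
structure PruningWitness (β : Ordinal) (t s v : P) : Prop where
  mem_of_covBy : ∀ y, t ⋖ y → y ∈ derIter (univ : Set P) β
  covBy : t ⋖ s
  terminalIn : TerminalIn (derIter (univ : Set P) β) s
  infinite : (terminalUpNbrs (derIter (univ : Set P) β) t).Infinite
  le : s ≤ v
  isMax : IsMax v

namespace PruningWitness

variable {β : Ordinal} {t s v : P}

lemma upNbrIn (hfin : ∀ x : P, (Iic x).Finite) (hw : PruningWitness β t s v) :
    UpNbrIn (derIter univ β) t s :=
  (upNbrIn_iff_covBy (isLowerSet_derIter hfin β).ordConnected).2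
    ⟨isLowerSet_derIter hfin β hw.covBy.1.le hw.terminalIn.1, hw.terminalIn.1, hw.covBy⟩

lemma mem_derIter_add_one (hfin : ∀ x : P, (Iic x).Finite) (hw : PruningWitness β t s v) :
    t ∈ derIter univ (β + 1) := by
  rw [derIter_add_one]
  exact mem_derStep_of_lt hfin (hw.upNbrIn hfin).1 hw.terminalIn.1 hw.covBy.1

lemma notMem_derIter_add_one (hfin : ∀ x : P, (Iic x).Finite) (hw : PruningWitness β t s v) :
    s ∉ derIter univ (β + 1) := by
  rw [derIter_add_one]
  exact notMem_derStep hw.terminalIn (hw.upNbrIn hfin) hw.infinite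

lemma Iic_inter_ne (hfin : ∀ x : P, (Iic x).Finite)
    (hchain : ∀ x y w : P, y ≤ x → w ≤ x → y ≤ w ∨ w ≤ y) (hw : PruningWitness β t s v)
    {γ : Ordinal} {w : P} (hγ : γ ≤ β) (hwmax : ¬∃ y, w ⋖ y) :
    Iic v ∩ derIter univ (β + 1) ≠ Iic w ∩ derIter univ γ := by
  intro h
  have ht : t ∈ Iic w ∩ derIter univ γ :=
    h ▸ ⟨hw.covBy.1.le.trans hw.le, hw.mem_derIter_add_one hfin⟩
  have htw : t < w := ht.1.lt_of_ne fun htw => hwmax ⟨s, htw ▸ hw.covBy⟩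
  obtain ⟨s', hts', hs'w⟩ := exists_covBy_le_of_finite_Iic hfin htw
  have hs' : s' ∈ Iic v ∩ derIter univ (β + 1) :=
    h ▸ ⟨hs'w, derIter_antitone univ hγ (hw.mem_of_covBy s' hts')⟩
  exact hw.notMem_derIter_add_one hfin
    (CovBy.eq_of_covBy_of_le hchain hw.covBy hts' hw.le hs'.1 ▸ hs'.2)

end PruningWitness

end Witness

section ComponentFamilies

variable {P : Type*} [PartialOrder P] {ι : Type*} {Q : ι → Type*} [∀ i, PartialOrder (Q i)]

structure Components (P : Type*) [PartialOrder P] {ι : Type*} (Q : ι → Type*)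
    [∀ i, PartialOrder (Q i)] where
  emb : ∀ i, Q i ↪o P
  isUpperSet_range : ∀ i, IsUpperSet (range (emb i))
  eq_of_le : ∀ {i j : ι} {x : Q i} {y : Q j}, emb i x ≤ emb j y → i = j

namespace Components

def sigma : Components (Σ i, Q i) Q where
  emb i := OrderEmbedding.ofMapLEIff (Sigma.mk i) fun _ _ => Sigma.mk_le_mk_iff
  isUpperSet_range i := by
    rintro _ ⟨j, y⟩ hle ⟨x, rfl⟩
    obtain ⟨h, -⟩ := Sigma.le_def.1 hle
    change i = j at h
    subst h
    exact ⟨y, rfl⟩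
  eq_of_le hle := (Sigma.le_def.1 hle).1

variable {R : Type*} [PartialOrder R]

def map (F : Components P Q) (f : P ↪o R) (hf : IsUpperSet (range f)) : Components R Q where
  emb i := (F.emb i).trans f
  isUpperSet_range i := by
    rintro _ c hle ⟨x, rfl⟩
    obtain ⟨y, rfl⟩ := hf hle ⟨_, rfl⟩
    obtain ⟨z, rfl⟩ := F.isUpperSet_range i (f.le_iff_le.1 hle) ⟨x, rfl⟩
    exact ⟨z, rfl⟩
  eq_of_le hle := F.eq_of_le (f.le_iff_le.1 hle)

lemma exists_of_orderIso_sigma (g : P ≃o Σ i, Q i) :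
    ∃ F : Components P Q, ⋃ i, range (F.emb i) = univ := by
  refine ⟨(sigma (Q := Q)).map g.symm.toOrderEmbedding (by simp [isUpperSet_univ]), ?_⟩
  refine eq_univ_of_forall fun x => mem_iUnion.2 ⟨(g x).1, (g x).2, ?_⟩
  simp [map, sigma]

lemma exists_of_orderIso_withBot (g : P ≃o WithBot (Σ i, Q i)) :
    ∃ F : Components P Q, ⋃ i, range (F.emb i) = Ioi (g.symm ⊥) := by
  let coe : (Σ i, Q i) ↪o WithBot (Σ i, Q i) :=
    OrderEmbedding.ofMapLEIff (↑) fun _ _ => WithBot.coe_le_coe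
  have hcoe : range coe = Ioi ⊥ := by
    ext x
    simp [coe, bot_lt_iff_ne_bot, WithBot.ne_bot_iff_exists]
  refine ⟨((sigma (Q := Q)).map coe (hcoe ▸ isUpperSet_Ioi ⊥)).map g.symm.toOrderEmbedding
    (by simp [isUpperSet_univ]), ?_⟩
  ext x
  simp only [map, sigma, RelEmbedding.coe_trans, OrderIso.coe_toOrderEmbedding,
    OrderEmbedding.coe_ofMapLEIff, mem_iUnion, mem_range, Function.comp_apply, mem_Ioi, coe]
  constructor
  · rintro ⟨i, y, rfl⟩
    exact g.symm.lt_iff_lt.2 (WithBot.bot_lt_coe _)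
  · intro h
    obtain ⟨⟨i, y⟩, hy⟩ := WithBot.ne_bot_iff_exists.1 (bot_lt_iff_ne_bot.1 (g.symm_apply_lt.1 h))
    exact ⟨i, y, by rw [hy, g.symm_apply_apply]⟩

variable (F : Components P Q) {i : ι}

lemma pairwiseIncomparable : PairwiseIncomparable fun i => range (F.emb i) := by
  rintro i j hij _ ⟨x, rfl⟩ _ ⟨y, rfl⟩ hle
  exact hij (F.eq_of_le hle)

lemma derIter_iUnion_range (γ : Ordinal) :
    derIter (⋃ i, range (F.emb i)) γ = ⋃ i, F.emb i '' derIter univ γ := by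
  rw [F.pairwiseIncomparable.derIter_iUnion]
  exact iUnion_congr fun i => by rw [← image_univ, derIter_image]

def PreservesStage (γ : Ordinal) : Prop :=
  ∀ i x, F.emb i x ∈ derIter (univ : Set P) γ ↔ x ∈ derIter (univ : Set (Q i)) γ

lemma preservesStage_of_inter_eq {γ : Ordinal}
    (h : derIter univ γ ∩ ⋃ i, range (F.emb i) = derIter (⋃ i, range (F.emb i)) γ) :
    F.PreservesStage γ := by
  intro i x
  have hx : F.emb i x ∈ ⋃ j, range (F.emb j) := mem_iUnion_of_mem i ⟨x, rfl⟩
  rw [← (and_iff_left hx : _ ∧ _ ↔ F.emb i x ∈ derIter univ γ), ← mem_inter_iff, h,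
    F.derIter_iUnion_range]
  refine ⟨fun hx' => ?_, fun hx' => mem_iUnion_of_mem i ⟨x, hx', rfl⟩⟩
  obtain ⟨j, y, hy, hyx⟩ := mem_iUnion.1 hx'
  obtain rfl := F.eq_of_le hyx.le
  rwa [← (F.emb j).injective hyx]

lemma preservesStage_of_iUnion_eq_univ (h : ⋃ i, range (F.emb i) = univ) (γ : Ordinal) :
    F.PreservesStage γ :=
  F.preservesStage_of_inter_eq (by rw [h, inter_univ])

lemma exists_emb_eq_of_le {x : Q i} {b : P} (h : F.emb i x ≤ b) : ∃ y, F.emb i y = b :=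
  F.isUpperSet_range i h ⟨x, rfl⟩

lemma emb_covBy_emb_iff {x y : Q i} : F.emb i x ⋖ F.emb i y ↔ x ⋖ y :=
  (F.isUpperSet_range i).ordConnected.apply_covBy_apply_iff _

lemma isMax_emb {x : Q i} (hx : IsMax x) : IsMax (F.emb i x) := by
  intro b hb
  obtain ⟨y, rfl⟩ := F.exists_emb_eq_of_le hb
  exact (F.emb i).le_iff_le.2 (hx ((F.emb i).le_iff_le.1 hb))

variable {F} {γ : Ordinal}

lemma terminalIn_derIter_emb_iff (hfinP : ∀ x : P, (Iic x).Finite)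
    (hfinQ : ∀ x : Q i, (Iic x).Finite) (hγ : F.PreservesStage γ) {x : Q i} :
    TerminalIn (derIter univ γ) (F.emb i x) ↔ TerminalIn (derIter univ γ) x := by
  simp only [terminalIn_iff hfinP, terminalIn_iff hfinQ, hγ i x]
  refine and_congr_right fun _ => ⟨fun h y hy hxy => h _ ((hγ i y).2 hy)
    ((F.emb i).lt_iff_lt.2 hxy), fun h b hb hxb => ?_⟩
  obtain ⟨y, rfl⟩ := F.exists_emb_eq_of_le hxb.le
  exact h y ((hγ i y).1 hb) ((F.emb i).lt_iff_lt.1 hxb)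

lemma terminalUpNbrs_derIter_emb (hfinP : ∀ x : P, (Iic x).Finite)
    (hfinQ : ∀ x : Q i, (Iic x).Finite) (hγ : F.PreservesStage γ) (u : Q i) :
    terminalUpNbrs (derIter univ γ) (F.emb i u) = F.emb i '' terminalUpNbrs (derIter univ γ) u := by
  ext b
  simp only [terminalUpNbrs, mem_ofPred_eq, mem_image,
    upNbrIn_iff_covBy (isLowerSet_derIter hfinP γ).ordConnected,
    upNbrIn_iff_covBy (isLowerSet_derIter hfinQ γ).ordConnected]
  constructor
  · rintro ⟨⟨hu, hb, hub⟩, hterm⟩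
    obtain ⟨y, rfl⟩ := F.exists_emb_eq_of_le hub.1.le
    exact ⟨y, ⟨⟨(hγ i u).1 hu, (hγ i y).1 hb, F.emb_covBy_emb_iff.1 hub⟩,
      (terminalIn_derIter_emb_iff hfinP hfinQ hγ).1 hterm⟩, rfl⟩
  · rintro ⟨y, ⟨⟨hu, hy, huy⟩, hterm⟩, rfl⟩
    exact ⟨⟨(hγ i u).2 hu, (hγ i y).2 hy, F.emb_covBy_emb_iff.2 huy⟩,
      (terminalIn_derIter_emb_iff hfinP hfinQ hγ).2 hterm⟩

lemma pruningWitness_emb (hfinP : ∀ x : P, (Iic x).Finite) (hfinQ : ∀ x : Q i, (Iic x).Finite)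
    (hγ : F.PreservesStage γ) {t s v : Q i} (hw : PruningWitness γ t s v) :
    PruningWitness γ (F.emb i t) (F.emb i s) (F.emb i v) where
  mem_of_covBy b htb := by
    obtain ⟨y, rfl⟩ := F.exists_emb_eq_of_le htb.1.le
    exact (hγ i y).2 (hw.mem_of_covBy y (F.emb_covBy_emb_iff.1 htb))
  covBy := F.emb_covBy_emb_iff.2 hw.covBy
  terminalIn := (terminalIn_derIter_emb_iff hfinP hfinQ hγ).2 hw.terminalIn
  infinite := by
    rw [terminalUpNbrs_derIter_emb hfinP hfinQ hγ]
    exact hw.infinite.image (F.emb i).injective.injOn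
  le := (F.emb i).le_iff_le.2 hw.le
  isMax := F.isMax_emb hw.isMax

end Components

end ComponentFamilies

section Collapse

variable {P : Type*} [PartialOrder P]

structure CollapsesAt (r : P) (κ : Ordinal) : Prop where
  isBot : IsBot r
  derIter_eq : derIter (univ : Set P) κ = {r}
  le_of_terminalIn : ∀ γ, TerminalIn (derIter (univ : Set P) γ) r → κ ≤ γ

variable {ι : Type*} {Q : ι → Type*} [∀ i, PartialOrder (Q i)]

namespace Components

lemma terminalIn_iUnion_image_iff (F : Components P Q) {S : ∀ i, Set (Q i)} {i : ι} {x : Q i}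
    (hx : x ∈ S i) : TerminalIn (⋃ j, F.emb j '' S j) (F.emb i x) ↔ TerminalIn (S i) x := by
  rw [(F.pairwiseIncomparable.mono fun j => image_subset_range _ _).terminalIn_iUnion_iff
    (mem_image_of_mem _ hx), terminalIn_image_iff]

structure RootedCollapse (F : Components P Q) (b : P) (r : ∀ i, Q i) (κ : ι → Ordinal)
    (ε : Ordinal) : Prop where
  isBot : IsBot b
  iUnion_range : ⋃ i, range (F.emb i) = Ioi b
  collapsesAt : ∀ i, CollapsesAt (r i) (κ i)
  le : ∀ i, κ i ≤ ε
  finite : ∀ γ < ε, {i | κ i ≤ γ}.Finite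

namespace RootedCollapse

variable {F : Components P Q} {b : P} {r : ∀ i, Q i} {κ : ι → Ordinal} {ε : Ordinal}

lemma covBy_iff (h : F.RootedCollapse b r κ ε) {y : P} : b ⋖ y ↔ ∃ i, F.emb i (r i) = y := by
  have hmem : ∀ i x, b < F.emb i x := fun i x => by
    rw [← mem_Ioi, ← h.iUnion_range]
    exact mem_iUnion_of_mem i (mem_range_self x)
  constructor
  · intro hby
    obtain ⟨i, x, rfl⟩ := mem_iUnion.1 (h.iUnion_range.symm ▸ hby.1 : y ∈ ⋃ i, range (F.emb i))
    refine ⟨i, ((h.collapsesAt i).isBot x).eq_or_lt.elim (congrArg _) fun hlt => ?_⟩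
    exact (hby.2 (hmem i (r i)) ((F.emb i).lt_iff_lt.2 hlt)).elim
  · rintro ⟨i, rfl⟩
    refine ⟨hmem i (r i), fun z hbz hzr => ?_⟩
    obtain ⟨j, w, rfl⟩ := mem_iUnion.1 (h.iUnion_range.symm ▸ hbz : z ∈ ⋃ i, range (F.emb i))
    obtain rfl := F.eq_of_le hzr.le
    exact not_lt_of_ge ((h.collapsesAt j).isBot w) ((F.emb j).lt_iff_lt.1 hzr)

lemma preservesStage (h : F.RootedCollapse b r κ ε) (hfin : ∀ x : P, (Iic x).Finite)
    (hchain : ∀ x y w : P, y ≤ x → w ≤ x → y ≤ w ∨ w ≤ y) [Nonempty ι] {γ : Ordinal}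
    (hγ : γ ≤ ε) : F.PreservesStage γ ∧ b ∈ derIter univ γ := by
  have hroot : ∀ i δ, r i ∈ derIter (univ : Set (Q i)) δ := fun i =>
    mem_derIter_of_isMin (h.collapsesAt i).isBot.isMin (mem_univ _)
  have key := derIter_inter_Ioi hfin hchain (t := b) (γ₀ := ε) (fun δ hδ => ?_) (fun δ _ => ?_) hγ
  · rw [← h.iUnion_range] at key
    exact ⟨F.preservesStage_of_inter_eq key.1, key.2⟩
  · rw [← h.iUnion_range, F.derIter_iUnion_range]
    refine ((h.finite δ hδ).image fun i => F.emb i (r i)).subset ?_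
    rintro y ⟨hby, hterm⟩
    obtain ⟨i, rfl⟩ := h.covBy_iff.1 hby
    exact ⟨i, (h.collapsesAt i).le_of_terminalIn δ
      ((F.terminalIn_iUnion_image_iff (hroot i δ)).1 hterm), rfl⟩
  · rw [← h.iUnion_range, F.derIter_iUnion_range]
    obtain ⟨i⟩ := ‹Nonempty ι›
    exact ⟨_, mem_iUnion_of_mem i (mem_image_of_mem _ (hroot i δ))⟩

lemma derIter_eq_insert (h : F.RootedCollapse b r κ ε) (hfin : ∀ x : P, (Iic x).Finite)
    (hchain : ∀ x y w : P, y ≤ x → w ≤ x → y ≤ w ∨ w ≤ y) [Nonempty ι] :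
    derIter univ ε = insert b (range fun i => F.emb i (r i)) := by
  obtain ⟨hpres, hb⟩ := h.preservesStage hfin hchain le_rfl
  have hroot i : derIter (univ : Set (Q i)) ε = {r i} :=
    derIter_eq_singleton_of_le (h.collapsesAt i).derIter_eq (h.le i)
  ext x
  constructor
  · intro hx
    refine (h.isBot x).eq_or_lt.imp Eq.symm fun hbx => ?_
    obtain ⟨i, y, rfl⟩ := mem_iUnion.1 (h.iUnion_range.symm ▸ hbx : x ∈ ⋃ i, range (F.emb i))
    have hy := (hpres i y).1 hx
    rw [hroot i, mem_singleton_iff] at hy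
    exact ⟨i, hy ▸ rfl⟩
  · rintro (rfl | ⟨i, rfl⟩)
    · exact hb
    · exact (hpres i _).2 (hroot i ▸ rfl)

lemma terminalIn_emb_root (h : F.RootedCollapse b r κ ε) (hfin : ∀ x : P, (Iic x).Finite)
    (hchain : ∀ x y w : P, y ≤ x → w ≤ x → y ≤ w ∨ w ≤ y) [Nonempty ι] (i : ι) :
    TerminalIn (derIter univ ε) (F.emb i (r i)) := by
  rw [h.derIter_eq_insert hfin hchain]
  refine ⟨mem_insert_of_mem _ ⟨i, rfl⟩, fun y ⟨_, hy, hlt, _⟩ => ?_⟩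
  rcases hy with rfl | ⟨j, rfl⟩
  · exact not_lt_of_ge (h.isBot _) hlt
  · obtain rfl := F.eq_of_le hlt.le
    exact hlt.ne rfl

lemma upNbrIn_bot (h : F.RootedCollapse b r κ ε) (hfin : ∀ x : P, (Iic x).Finite)
    (hchain : ∀ x y w : P, y ≤ x → w ≤ x → y ≤ w ∨ w ≤ y) [Nonempty ι] (i : ι) :
    UpNbrIn (derIter univ ε) b (F.emb i (r i)) := by
  refine (upNbrIn_iff_covBy (isLowerSet_derIter hfin ε).ordConnected).2
    ⟨?_, ?_, h.covBy_iff.2 ⟨i, rfl⟩⟩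
  all_goals rw [h.derIter_eq_insert hfin hchain]
  exacts [mem_insert _ _, mem_insert_of_mem _ ⟨i, rfl⟩]

lemma infinite_terminalUpNbrs (h : F.RootedCollapse b r κ ε) (hfin : ∀ x : P, (Iic x).Finite)
    (hchain : ∀ x y w : P, y ≤ x → w ≤ x → y ≤ w ∨ w ≤ y) [Infinite ι] :
    (terminalUpNbrs (derIter univ ε) b).Infinite :=
  (infinite_range_of_injective fun _ _ hij => F.eq_of_le hij.le).mono <| range_subset_iff.2
    fun i => ⟨h.upNbrIn_bot hfin hchain i, h.terminalIn_emb_root hfin hchain i⟩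

lemma derIter_add_one_eq (h : F.RootedCollapse b r κ ε) (hfin : ∀ x : P, (Iic x).Finite)
    (hchain : ∀ x y w : P, y ≤ x → w ≤ x → y ≤ w ∨ w ≤ y) [Infinite ι] :
    derIter univ (ε + 1) = {b} := by
  rw [derIter_add_one]
  refine subset_antisymm (fun x hx => ?_) ?_
  · rcases (h.derIter_eq_insert hfin hchain ▸ hx.1 : x ∈ insert b _) with rfl | ⟨i, rfl⟩
    · rfl
    · exact (notMem_derStep (h.terminalIn_emb_root hfin hchain i) (h.upNbrIn_bot hfin hchain i)
        (h.infinite_terminalUpNbrs hfin hchain) hx).elim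
  · rintro _ rfl
    obtain ⟨i⟩ := (inferInstance : Nonempty ι)
    obtain ⟨hb, hr, hlt, -⟩ := h.upNbrIn_bot hfin hchain i
    exact mem_derStep_of_lt hfin hb hr hlt

lemma pruningWitness (h : F.RootedCollapse b r κ ε) (hfin : ∀ x : P, (Iic x).Finite)
    (hchain : ∀ x y w : P, y ≤ x → w ≤ x → y ≤ w ∨ w ≤ y) [Infinite ι] {i : ι} {v : Q i}
    (hv : IsMax v) : PruningWitness ε b (F.emb i (r i)) (F.emb i v) where
  mem_of_covBy y hby := by
    obtain ⟨j, rfl⟩ := h.covBy_iff.1 hby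
    exact (h.upNbrIn_bot hfin hchain j).2.1
  covBy := h.covBy_iff.2 ⟨i, rfl⟩
  terminalIn := h.terminalIn_emb_root hfin hchain i
  infinite := h.infinite_terminalUpNbrs hfin hchain
  le := (F.emb i).le_iff_le.2 ((h.collapsesAt i).isBot v)
  isMax := F.isMax_emb hv

end RootedCollapse

end Components

end Collapse

section Forests

universe u

/-- The inductive construction of the forests `F_γ = V γ` for countable `γ`, stated through order
isomorphisms. -/
structure ForestSystem (V : Ordinal.{u} → Type) [∀ γ, PartialOrder (V γ)]
    (seq : Ordinal.{u} → ℕ → Ordinal.{u}) : Prop where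
  subsingleton_zero : ∀ x y : V 0, x = y
  nonempty_zero : Nonempty (V 0)
  finite_Iic : ∀ γ : Ordinal.{u}, γ.card ≤ Cardinal.aleph0 → ∀ x : V γ, (Iic x).Finite
  chain_Iic : ∀ γ : Ordinal.{u}, γ.card ≤ Cardinal.aleph0 →
    ∀ x y w : V γ, y ≤ x → w ≤ x → y ≤ w ∨ w ≤ y
  seq_strictMono : ∀ γ : Ordinal.{u}, γ.card ≤ Cardinal.aleph0 → Order.IsSuccLimit γ →
    StrictMono (seq γ)
  seq_succ : ∀ γ : Ordinal.{u}, γ.card ≤ Cardinal.aleph0 → Order.IsSuccLimit γ →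
    ∀ n : ℕ, ∃ δ : Ordinal.{u}, seq γ n = δ + 1
  seq_lt : ∀ γ : Ordinal.{u}, γ.card ≤ Cardinal.aleph0 → Order.IsSuccLimit γ →
    ∀ n : ℕ, seq γ n < γ
  seq_cofinal : ∀ γ : Ordinal.{u}, γ.card ≤ Cardinal.aleph0 → Order.IsSuccLimit γ →
    ∀ δ : Ordinal.{u}, δ < γ → ∃ n : ℕ, δ < seq γ n
  iso_succ : ∀ γ : Ordinal.{u}, γ.card ≤ Cardinal.aleph0 → (γ = 0 ∨ ∃ δ : Ordinal.{u}, γ = δ + 1) →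
    Nonempty (V (γ + 1) ≃o WithBot (Σ _ : ℕ, V γ))
  iso_limit_succ : ∀ γ : Ordinal.{u}, γ.card ≤ Cardinal.aleph0 → Order.IsSuccLimit γ →
    Nonempty (V (γ + 1) ≃o WithBot (V γ))
  iso_limit : ∀ γ : Ordinal.{u}, γ.card ≤ Cardinal.aleph0 → Order.IsSuccLimit γ →
    Nonempty (V γ ≃o (Σ n : ℕ, V (seq γ n)))

lemma card_le_aleph0_of_le {a b : Ordinal.{u}} (hab : a ≤ b) (hb : b.card ≤ Cardinal.aleph0) :
    a.card ≤ Cardinal.aleph0 :=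
  (Ordinal.card_le_card hab).trans hb

namespace ForestSystem

variable {V : Ordinal.{u} → Type} [∀ γ, PartialOrder (V γ)] {seq : Ordinal.{u} → ℕ → Ordinal.{u}}

/-- Below its root, `F_{a+1}` consists of copies of the forests `F_{σ n}`, where `σ` is constant
`a` if `a` is zero or a successor and `σ = seq a` if `a` is a limit. -/
lemma exists_orderIso_add_one (hV : ForestSystem V seq) {a : Ordinal.{u}}
    (ha : a.card ≤ Cardinal.aleph0) :
    ∃ σ : ℕ → Ordinal.{u}, (∀ n, σ n ≤ a) ∧ (∀ n, σ n = 0 ∨ ∃ b, σ n = b + 1) ∧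
      (∀ γ < a, {n | σ n ≤ γ}.Finite) ∧ (∀ γ < a, ∃ n, γ < σ n) ∧
      Nonempty (V (a + 1) ≃o WithBot (Σ n, V (σ n))) := by
  by_cases hl : Order.IsSuccLimit a
  · refine ⟨seq a, fun n => (hV.seq_lt a ha hl n).le, fun n => Or.inr (hV.seq_succ a ha hl n),
      fun γ hγ => ?_, hV.seq_cofinal a ha hl, ?_⟩
    · obtain ⟨N, hN⟩ := hV.seq_cofinal a ha hl γ hγ
      exact (finite_Iio N).subset fun n hn =>
        (hV.seq_strictMono a ha hl).lt_iff_lt.1 (hn.trans_lt hN)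
    · obtain ⟨g⟩ := hV.iso_limit_succ a ha hl
      obtain ⟨h⟩ := hV.iso_limit a ha hl
      exact ⟨g.trans h.withBotCongr⟩
  · have h0s : a = 0 ∨ ∃ b, a = b + 1 := by
      rcases Ordinal.zero_or_succ_or_isSuccLimit a with h | ⟨b, rfl⟩ | h
      exacts [Or.inl h, Or.inr ⟨b, Order.succ_eq_add_one b⟩, (hl h).elim]
    exact ⟨fun _ => a, fun _ => le_rfl, fun _ => h0s,
      fun γ hγ => finite_empty.subset fun _ hn => (not_le.2 hγ hn).elim, fun _ hγ => ⟨0, hγ⟩,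
      hV.iso_succ a ha h0s⟩

lemma exists_rootedCollapse (hV : ForestSystem V seq) {a : Ordinal.{u}}
    (ha : a.card ≤ Cardinal.aleph0)
    (hroot : ∀ δ ≤ a, (δ = 0 ∨ ∃ b, δ = b + 1) → ∃ r : V δ, CollapsesAt r δ) :
    ∃ σ : ℕ → Ordinal.{u}, (∀ γ < a, ∃ n, γ < σ n) ∧
      ∃ (F : Components (V (a + 1)) fun n => V (σ n)) (b : V (a + 1)) (r : ∀ n, V (σ n)),
        F.RootedCollapse b r σ a := by
  obtain ⟨σ, hσa, hσs, hσfin, hσcof, ⟨g⟩⟩ := hV.exists_orderIso_add_one ha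
  obtain ⟨F, hF⟩ := Components.exists_of_orderIso_withBot g
  choose r hr using fun n => hroot (σ n) (hσa n) (hσs n)
  exact ⟨σ, hσcof, F, g.symm ⊥, r, fun x => g.symm_apply_le.2 bot_le, hF, hr, hσa, hσfin⟩

lemma exists_collapsesAt (hV : ForestSystem V seq) {δ : Ordinal.{u}}
    (hδ : δ.card ≤ Cardinal.aleph0) (h0s : δ = 0 ∨ ∃ a, δ = a + 1) :
    ∃ r : V δ, CollapsesAt r δ := by
  induction δ using WellFoundedLT.induction with
  | _ δ ih =>
    rcases h0s with rfl | ⟨a, rfl⟩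
    · obtain ⟨x⟩ := hV.nonempty_zero
      refine ⟨x, fun y => (hV.subsingleton_zero x y).le, ?_, fun _ _ => zero_le⟩
      rw [derIter_zero]
      exact eq_singleton_iff_unique_mem.2 ⟨mem_univ x, fun y _ => hV.subsingleton_zero y x⟩
    have ha := card_le_aleph0_of_le (Order.le_succ a) (Order.succ_eq_add_one a ▸ hδ)
    have hfin := hV.finite_Iic _ hδ
    have hchain := hV.chain_Iic _ hδ
    obtain ⟨σ, -, F, b, r, h⟩ := hV.exists_rootedCollapse ha fun δ hδa h0s =>
      ih δ (Order.lt_add_one_iff.2 hδa) (card_le_aleph0_of_le hδa ha) h0s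
    refine ⟨b, h.isBot, h.derIter_add_one_eq hfin hchain, fun γ hterm => ?_⟩
    by_contra hγ
    obtain ⟨hpres, -⟩ := h.preservesStage hfin hchain (Order.lt_add_one_iff.1 (not_le.1 hγ))
    have hr0 := (hpres 0 (r 0)).2
      (mem_derIter_of_isMin (h.collapsesAt 0).isBot.isMin (mem_univ _) γ)
    exact ((terminalIn_iff hfin).1 hterm).2 _ hr0 (h.covBy_iff.2 ⟨0, rfl⟩).lt

lemma exists_isMax (hV : ForestSystem V seq) {γ : Ordinal.{u}} (hγ : γ.card ≤ Cardinal.aleph0) :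
    ∃ v : V γ, IsMax v := by
  induction γ using WellFoundedLT.induction with
  | _ γ ih =>
    rcases Ordinal.zero_or_succ_or_isSuccLimit γ with rfl | ⟨a, rfl⟩ | hl
    · obtain ⟨x⟩ := hV.nonempty_zero
      exact ⟨x, fun y _ => (hV.subsingleton_zero y x).le⟩
    · rw [Order.succ_eq_add_one] at hγ ih ⊢
      have ha := card_le_aleph0_of_le (Order.le_succ a) (Order.succ_eq_add_one a ▸ hγ)
      obtain ⟨σ, -, F, _, _, h⟩ := hV.exists_rootedCollapse ha fun δ hδa h0s =>
        hV.exists_collapsesAt (card_le_aleph0_of_le hδa ha) h0s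
      obtain ⟨v, hv⟩ := ih (σ 0) (Order.lt_add_one_iff.2 (h.le 0))
        (card_le_aleph0_of_le (h.le 0) ha)
      exact ⟨F.emb 0 v, F.isMax_emb hv⟩
    · obtain ⟨g⟩ := hV.iso_limit γ hγ hl
      obtain ⟨F, -⟩ := Components.exists_of_orderIso_sigma g
      obtain ⟨v, hv⟩ := ih (seq γ 0) (hV.seq_lt γ hγ hl 0)
        (card_le_aleph0_of_le (hV.seq_lt γ hγ hl 0).le hγ)
      exact ⟨F.emb 0 v, F.isMax_emb hv⟩

lemma exists_pruningWitness (hV : ForestSystem V seq) {α : Ordinal.{u}}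
    (hα : α.card ≤ Cardinal.aleph0) {β : Ordinal.{u}} (hβ : β < α) :
    ∃ t s v : V α, PruningWitness β t s v := by
  induction α using WellFoundedLT.induction with
  | _ α ih =>
    have hfin := hV.finite_Iic α hα
    have hchain := hV.chain_Iic α hα
    rcases Ordinal.zero_or_succ_or_isSuccLimit α with rfl | ⟨a, rfl⟩ | hl
    · exact (not_lt_of_ge zero_le hβ).elim
    · rw [Order.succ_eq_add_one] at hα ih hβ hfin hchain ⊢
      have ha := card_le_aleph0_of_le (Order.le_succ a) (Order.succ_eq_add_one a ▸ hα)
      obtain ⟨σ, hσcof, F, _, _, h⟩ := hV.exists_rootedCollapse ha fun δ hδa h0s =>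
        hV.exists_collapsesAt (card_le_aleph0_of_le hδa ha) h0s
      rcases (Order.lt_add_one_iff.1 hβ).eq_or_lt with rfl | hβa
      · obtain ⟨v, hv⟩ := hV.exists_isMax (card_le_aleph0_of_le (h.le 0) ha)
        exact ⟨_, _, _, h.pruningWitness hfin hchain (i := 0) hv⟩
      · obtain ⟨n, hn⟩ := hσcof β hβa
        have hσn := card_le_aleph0_of_le (h.le n) ha
        obtain ⟨t, s, v, hw⟩ := ih (σ n) (Order.lt_add_one_iff.2 (h.le n)) hσn hn
        exact ⟨_, _, _, F.pruningWitness_emb hfin (hV.finite_Iic _ hσn)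
          (h.preservesStage hfin hchain hβa.le).1 hw⟩
    · obtain ⟨g⟩ := hV.iso_limit α hα hl
      obtain ⟨F, hF⟩ := Components.exists_of_orderIso_sigma g
      obtain ⟨n, hn⟩ := hV.seq_cofinal α hα hl β hβ
      have hn' := card_le_aleph0_of_le (hV.seq_lt α hα hl n).le hα
      obtain ⟨t, s, v, hw⟩ := ih (seq α n) (hV.seq_lt α hα hl n) hn' hn
      exact ⟨_, _, _, F.pruningWitness_emb hfin (hV.finite_Iic _ hn')
        (F.preservesStage_of_iUnion_eq_univ hF β) hw⟩

end ForestSystem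

end Forests

section Shortening

variable {P : Type*} [PartialOrder P] {Z : Type*} [NormedAddCommGroup Z] [NormedSpace ℝ Z]
  {e : P → ℕ} {z : ℕ → Z} {zs : ℕ → StrongDual ℝ Z}

lemma coefN_ne_zero (hepos : ∀ x, e x ≠ 0) (u : P) : coefN e u ≠ 0 := by
  unfold coefN
  split <;> exact hepos _

lemma shortVec_apply (hfin : ∀ x : P, (Iic x).Finite) (heinj : Function.Injective e)
    (hbi : ∀ i j, zs j (z i) = if i = j then (1 : ℝ) else 0) (S : Set P) (v u : P) :
    shortVec e zs S v (z (e u)) = (Iic v ∩ S).indicator (fun u => (coefN e u : ℝ)) u := by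
  classical
  have hA : (Iic v ∩ S).Finite := (hfin v).subset inter_subset_left
  rw [shortVec, Iic_def, finsum_mem_eq_finite_toFinset_sum _ hA, _root_.sum_apply]
  simp only [_root_.smul_apply, hbi, heinj.eq_iff, smul_eq_mul, mul_ite, mul_one,
    mul_zero, Finset.sum_ite_eq, hA.mem_toFinset, indicator_apply]

lemma Iic_inter_eq_of_shortVec_eq (hfin : ∀ x : P, (Iic x).Finite) (heinj : Function.Injective e)
    (hepos : ∀ x, e x ≠ 0) (hbi : ∀ i j, zs j (z i) = if i = j then (1 : ℝ) else 0)
    {S T : Set P} {v w : P} (h : shortVec e zs S v = shortVec e zs T w) :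
    Iic v ∩ S = Iic w ∩ T := by
  classical
  ext u
  have hu := DFunLike.congr_fun h (z (e u))
  have hne : (coefN e u : ℝ) ≠ 0 := Nat.cast_ne_zero.2 (coefN_ne_zero hepos u)
  rw [shortVec_apply hfin heinj hbi, shortVec_apply hfin heinj hbi] at hu
  simp only [indicator_apply] at hu
  split_ifs at hu <;> tauto

end Shortening

theorem statement8
    (V : Ordinal → Type) [∀ γ : Ordinal, PartialOrder (V γ)]
    (seq : Ordinal → ℕ → Ordinal)
    (hV0 : ∀ x y : V 0, x = y) (hV0ne : Nonempty (V 0))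
    (hchainfin : ∀ γ : Ordinal, γ.card ≤ Cardinal.aleph0 → ∀ x : V γ, {y : V γ | y ≤ x}.Finite)
    (hchainlin : ∀ γ : Ordinal, γ.card ≤ Cardinal.aleph0 →
      ∀ x y w : V γ, y ≤ x → w ≤ x → y ≤ w ∨ w ≤ y)
    (hseqmono : ∀ γ : Ordinal, γ.card ≤ Cardinal.aleph0 → Order.IsSuccLimit γ → StrictMono (seq γ))
    (hseqsucc : ∀ γ : Ordinal, γ.card ≤ Cardinal.aleph0 → Order.IsSuccLimit γ →
      ∀ n : ℕ, ∃ δ : Ordinal, seq γ n = δ + 1)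
    (hseqlt : ∀ γ : Ordinal, γ.card ≤ Cardinal.aleph0 → Order.IsSuccLimit γ → ∀ n : ℕ, seq γ n < γ)
    (hseqcof : ∀ γ : Ordinal, γ.card ≤ Cardinal.aleph0 → Order.IsSuccLimit γ →
      ∀ δ : Ordinal, δ < γ → ∃ n : ℕ, δ < seq γ n)
    (hsucc : ∀ γ : Ordinal, γ.card ≤ Cardinal.aleph0 → (γ = 0 ∨ ∃ δ : Ordinal, γ = δ + 1) →
      Nonempty (V (γ + 1) ≃o WithBot (Σ _ : ℕ, V γ)))
    (hlimsucc : ∀ γ : Ordinal, γ.card ≤ Cardinal.aleph0 → Order.IsSuccLimit γ →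
      Nonempty (V (γ + 1) ≃o WithBot (V γ)))
    (hlim : ∀ γ : Ordinal, γ.card ≤ Cardinal.aleph0 → Order.IsSuccLimit γ →
      Nonempty (V γ ≃o (Σ n : ℕ, V (seq γ n))))
    {Z : Type*} [NormedAddCommGroup Z] [NormedSpace ℝ Z] [CompleteSpace Z]
    (z : ℕ → Z) (zs : ℕ → StrongDual ℝ Z) (C K : ℝ)
    (hz1 : ∀ i : ℕ, 1 ≤ ‖z i‖)
    (hzC : ∀ k : ℕ, ‖∑ i ∈ Finset.range k, z i‖ ≤ C)
    (hbasic : ∀ m n : ℕ, m ≤ n → ∀ a : ℕ → ℝ,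
      ‖∑ i ∈ Finset.range m, a i • z i‖ ≤ K * ‖∑ i ∈ Finset.range n, a i • z i‖)
    (hspan : (Submodule.span ℝ (Set.range z)).topologicalClosure = ⊤)
    (hbi : ∀ i j : ℕ, zs j (z i) = if i = j then (1 : ℝ) else 0)
    (α : Ordinal) (hαc : α.card ≤ Cardinal.aleph0)
    (e : V α → ℕ) (heinj : Function.Injective e)
    (hemono : ∀ x y : V α, x < y → e x < e y)
    (hepos : ∀ x : V α, e x ≠ 0)
    (β : Ordinal) (hβ : β < α) :
    (XsetOf e zs (derIter (Set.univ : Set (V α)) (β + 1)) \ (⋃ γ : Ordinal, ⋃ _ : γ ≤ β, XsetOf e zs (derIter (Set.univ : Set (V α)) γ))).Nonempty := by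
  have hV : ForestSystem V seq := ⟨hV0, hV0ne, hchainfin, hchainlin, hseqmono, hseqsucc, hseqlt,
    hseqcof, hsucc, hlimsucc, hlim⟩
  have hfin := hV.finite_Iic α hαc
  obtain ⟨t, s, v, hw⟩ := hV.exists_pruningWitness hαc hβ
  refine ⟨shortVec e zs (derIter univ (β + 1)) v,
    ⟨v, fun ⟨y, hy⟩ => hw.isMax.not_lt hy.lt, rfl⟩, ?_⟩
  simp only [mem_iUnion]
  rintro ⟨γ, hγ, w, hwmax, hvw⟩
  exact hw.Iic_inter_ne hfin (hV.chain_Iic α hαc) hγ hwmax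
    (Iic_inter_eq_of_shortVec_eq hfin heinj hepos hbi hvw)

end Paper
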